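/- Let m be a familial monad on c ⥤ Type (familial, with cartesian unit and multiplication), and let Θ_m be the full subcategory of the Eilenberg–Moore category of m spanned by the free algebras on the arities m[M]. The functor from cᵒᵖ to the Eilenberg–Moore category of m sending an object C to the free m-algebra on the representable copresheaf c(C, −), and a morphism f : C → C' in c to the free-algebra morphism induced by precomposition c(C', −) ⟶ c(C, −), is faithful; moreover each of its values is isomorphic to an object of Θ_m (namely the free algebra on the arity m[η(C)] of the unit operation, which is isomorphic to the representable at C). -/

import Mathlib

/-!
Cartesianness of the unit makes each `η_X` a pullback of `η_1 : 1 ⟶ m 1`, a mono since `1` is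
terminal; so `m.free` is faithful, and so is `coyoneda`.

For the arity of the unit operation, transport `η` along the familial representation to a
cartesian point `e : 𝟭 ⟶ Σ_M Hom(m[M], −)`. The generic element `e(𝟙_C) = ⟨η(C), u⟩` gives
`u : m[η(C)] ⟶ c(C, −)`. Since `⟨η(C), 𝟙⟩` lies over `e_1(*)`, the pullback square of
`m[η(C)] ⟶ 1` lifts it to `w : c(C, −) ⟶ m[η(C)]`; naturality of `e` and uniqueness of lifts
then show that `u` and `w` are mutually inverse.
-/
namespace Fam
open CategoryTheory Opposite Limits
private lemma sigmaExt {α : Type} {β : α → Type} {a a' : α} {b : β a} {b' : β a'}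
    (h : a = a') (h' : HEq b b') : (⟨a, b⟩ : Σ x, β x) = ⟨a', b'⟩ := by
  subst h; cases h'; rfl
variable {c d : Type} [SmallCategory c] [SmallCategory d]
def elHom (pos : c ⥤ Type) {C C' : c} (f : C ⟶ C') (I : pos.obj C) :
    pos.elementsMk C I ⟶ pos.elementsMk C' (pos.map f I) :=
  CategoryOfElements.homMk _ _ f rfl
lemma eqToHom_val {pos : c ⥤ Type} {x y : pos.Elements} (E : x = y) :
    (eqToHom E).val = eqToHom (congrArg Sigma.fst E) := by
  subst E; simp
@[simps]
def famApply (pos : c ⥤ Type) (ar : pos.Elementsᵒᵖ ⥤ d ⥤ Type) :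
    (d ⥤ Type) ⥤ c ⥤ Type where
  obj X :=
    { obj := fun C => Σ I : pos.obj C, ar.obj (op (pos.elementsMk C I)) ⟶ X
      map := fun {C C'} f => TypeCat.ofHom fun x => ⟨pos.map f x.1, ar.map (elHom pos f x.1).op ≫ x.2⟩
      map_id := by
        intro C
        refine ConcreteCategory.hom_ext _ _ fun x => ?_
        obtain ⟨I, g⟩ := x
        have h : pos.map (𝟙 C) I = I := by simp
        have hE : pos.elementsMk C I = pos.elementsMk C (pos.map (𝟙 C) I) := by rw [h]
        have he : elHom pos (𝟙 C) I = eqToHom hE := by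
          apply CategoryOfElements.ext
          rw [eqToHom_val]
          simp [elHom]
        dsimp
        refine sigmaExt h ?_
        rw [he]
        simp [eqToHom_op, eqToHom_map]
      map_comp := by
        intro C C' C'' f g
        refine ConcreteCategory.hom_ext _ _ fun x => ?_
        obtain ⟨I, u⟩ := x
        have h : pos.map (f ≫ g) I = pos.map g (pos.map f I) := by simp
        have hE : pos.elementsMk C'' (pos.map (f ≫ g) I)
            = pos.elementsMk C'' (pos.map g (pos.map f I)) := by rw [h]
        have hcomp : elHom pos f I ≫ elHom pos g (pos.map f I)
            = elHom pos (f ≫ g) I ≫ eqToHom hE := by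
          apply CategoryOfElements.ext
          rw [CategoryOfElements.comp_val, CategoryOfElements.comp_val, eqToHom_val]
          simp [elHom]
        dsimp
        refine sigmaExt h ?_
        rw [← Category.assoc, ← ar.map_comp, ← op_comp, hcomp, op_comp, ar.map_comp,
          Category.assoc]
        simp [eqToHom_op, eqToHom_map] }
  map {X Y} t :=
    { app := fun C => TypeCat.ofHom fun x => ⟨x.1, x.2 ≫ t⟩
      naturality := by
        intro C C' f
        refine ConcreteCategory.hom_ext _ _ fun x => ?_
        dsimp
        rw [Category.assoc] }
  map_id := by
    intro X
    apply NatTrans.ext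
    funext C
    refine ConcreteCategory.hom_ext _ _ fun x => ?_
    dsimp
    rw [Category.comp_id]
  map_comp := by
    intro X Y Z s t
    apply NatTrans.ext
    funext C
    refine ConcreteCategory.hom_ext _ _ fun x => ?_
    dsimp
    rw [Category.assoc]

/-- The unit exhibiting `famApply pos (ar ⋙ G)` as the right coclosure `⌈F/G⌉`,
i.e. the left Kan extension of the familial functor `F = famApply pos ar` along `G`. -/
def coclosureUnit {e : Type} [SmallCategory e] (pos : c ⥤ Type)
    (ar : pos.Elementsᵒᵖ ⥤ e ⥤ Type) (G : (e ⥤ Type) ⥤ d ⥤ Type) :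
    famApply pos ar ⟶ G ⋙ famApply pos (ar ⋙ G) where
  app X :=
    { app := fun C => TypeCat.ofHom fun x => ⟨x.1, G.map x.2⟩
      naturality := by
        intro C C' f
        refine ConcreteCategory.hom_ext _ _ fun x => ?_
        show (⟨pos.map f x.1, G.map (ar.map (elHom pos f x.1).op ≫ x.2)⟩ :
            Σ I : pos.obj C', (ar ⋙ G).obj (op (pos.elementsMk C' I)) ⟶ G.obj X)
          = ⟨pos.map f x.1, G.map (ar.map (elHom pos f x.1).op) ≫ G.map x.2⟩
        rw [G.map_comp] }
  naturality := by
    intro X Y t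
    apply NatTrans.ext
    funext C
    refine ConcreteCategory.hom_ext _ _ fun x => ?_
    show (⟨x.1, G.map (x.2 ≫ t)⟩ :
        Σ I : pos.obj C, (ar ⋙ G).obj (op (pos.elementsMk C I)) ⟶ G.obj Y)
      = ⟨x.1, G.map x.2 ≫ G.map t⟩
    rw [G.map_comp]

section Statement14

variable {c : Type} [SmallCategory c]
  (m : Monad (c ⥤ Type)) {posm : c ⥤ Type} (arm : posm.Elementsᵒᵖ ⥤ c ⥤ Type)

/-- The free `m`-algebra on the arity of the operation `M`. -/
def theoryObj (M : posm.Elements) : m.Algebra :=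
  m.free.obj (arm.obj (op M))

/-- The theory category `Θ_m`. -/
def Theta : Type :=
  InducedCategory m.Algebra (theoryObj m arm)

instance : Category (Theta m arm) :=
  InducedCategory.instCategory

/-- The inclusion `Θ_m ⥤ m-Alg`. -/
def thetaIncl : Theta m arm ⥤ m.Algebra :=
  inducedFunctor (theoryObj m arm)

/-- The terminal copresheaf on `c`. -/
def termPSh : c ⥤ Type := (Functor.const c).obj PUnit

variable (em : famApply posm arm ≅ (m : (c ⥤ Type) ⥤ c ⥤ Type))

/-- The unit operation `η(C) ∈ m(1)(C)`. -/
def unitOp (C : c) : posm.obj C :=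
  ((em.inv.app (termPSh)).app C ((m.η.app (termPSh)).app C PUnit.unit)).1

/-- The unit operation at `C`, as an object of `Θ_m`. -/
def unitObj (C : c) : Theta m arm :=
  posm.elementsMk C (unitOp m arm em C)

def termPShIsTerminal : IsTerminal (termPSh (c := c)) :=
  Functor.isTerminalConst c Types.isTerminalPUnit

lemma _root_.CategoryTheory.Monad.free_faithful_of_isPullback_unit {𝒞 : Type*} [Category 𝒞]
    (T : Monad 𝒞) {X₀ : 𝒞} (hX₀ : IsTerminal X₀)
    (hη : ∀ X, IsPullback (hX₀.from X) (T.η.app X) (T.η.app X₀) (T.map (hX₀.from X))) :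
    T.free.Faithful := by
  have (X : 𝒞) : Mono (T.adj.unit.app X) := by
    rw [Monad.adj_unit]
    exact (hη X).mono_snd_of_mono (hX₀.mono_from _)
  exact T.adj.faithful_L_of_mono_unit_app

lemma isPullback_naturality_comp_iso {𝒞 𝒟 : Type*} [Category 𝒞] [Category 𝒟] {F G H : 𝒞 ⥤ 𝒟}
    (α : F ⟶ G) (β : G ≅ H) {X Y : 𝒞} {f : X ⟶ Y}
    (h : IsPullback (F.map f) (α.app X) (α.app Y) (G.map f)) :
    IsPullback (F.map f) ((α ≫ β.hom).app X) ((α ≫ β.hom).app Y) (H.map f) :=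
  h.paste_vert (IsPullback.of_vert_isIso ⟨β.hom.naturality f⟩)

section CartesianPoint

-- `e` plays the role of the unit of `m` transported along the familial representation.
variable {pos : c ⥤ Type} {ar : pos.Elementsᵒᵖ ⥤ c ⥤ Type}
  (e : 𝟭 (c ⥤ Type) ⟶ famApply pos ar)

lemma point_app_map_apply {X Y : c ⥤ Type} (f : X ⟶ Y) {C : c} (x : X.obj C) :
    (e.app Y).app C (f.app C x) = ⟨((e.app X).app C x).1, ((e.app X).app C x).2 ≫ f⟩ :=
  ConcreteCategory.congr_hom (NatTrans.congr_app (e.naturality f) C) x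

lemma point_app_fst (X : c ⥤ Type) {C : c} (x : X.obj C) :
    ((e.app X).app C x).1 = ((e.app termPSh).app C PUnit.unit).1 :=
  (congrArg Sigma.fst (point_app_map_apply e (termPShIsTerminal.from X) x)).symm

variable (he : ∀ X : c ⥤ Type, IsPullback (termPShIsTerminal.from X) (e.app X) (e.app termPSh)
    ((famApply pos ar).map (termPShIsTerminal.from X)))
include he

lemma isIso_of_point_coyoneda_eq {C : c} {I : pos.obj C}
    (u : ar.obj (op (pos.elementsMk C I)) ⟶ coyoneda.obj (op C))
    (hu : (e.app (coyoneda.obj (op C))).app C (𝟙 C) = ⟨I, u⟩) : IsIso u := by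
  let F := famApply pos ar
  let A := ar.obj (op (pos.elementsMk C I))
  let z : (F.obj A).obj C := ⟨I, 𝟙 A⟩
  have hlift : termPShIsTerminal.from (coyoneda.obj (op C)) ≫ e.app termPSh
      = coyonedaEquiv.symm z ≫ F.map (termPShIsTerminal.from A) := by
    apply coyonedaEquiv.injective
    rw [coyonedaEquiv_comp, coyonedaEquiv_comp, Equiv.apply_symm_apply, coyonedaEquiv_apply,
      point_app_map_apply, hu]
    exact congrArg (Sigma.mk I) (termPShIsTerminal.hom_ext _ _)
  let w := (he A).lift _ _ hlift
  have hwz : (e.app A).app C (w.app C (𝟙 C)) = z := by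
    rw [← coyonedaEquiv_apply, ← coyonedaEquiv_comp, (he A).lift_snd, Equiv.apply_symm_apply]
  have hwu : w ≫ u = 𝟙 _ := by
    refine (he _).hom_ext (termPShIsTerminal.hom_ext _ _) (coyonedaEquiv.injective ?_)
    change (e.app (coyoneda.obj (op C))).app C (u.app C (w.app C (𝟙 C)))
      = (e.app (coyoneda.obj (op C))).app C (𝟙 C)
    rw [point_app_map_apply, hwz, hu]
    exact congrArg (Sigma.mk I) (Category.id_comp u)
  have huw : u ≫ w = 𝟙 A := by
    have h : (⟨I, u ≫ w⟩ : (F.obj A).obj C) = z := by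
      rw [← hwz, point_app_map_apply, hu]
    exact eq_of_heq (Sigma.mk.inj_iff.mp h).2
  exact ⟨w, huw, hwu⟩

lemma nonempty_arity_iso_coyoneda (C : c) :
    Nonempty (ar.obj (op (pos.elementsMk C ((e.app termPSh).app C PUnit.unit).1))
      ≅ coyoneda.obj (op C)) := by
  obtain ⟨I, u, hu⟩ : ∃ I u, (e.app (coyoneda.obj (op C))).app C (𝟙 C) = ⟨I, u⟩ := ⟨_, _, rfl⟩
  obtain rfl : I = _ :=
    (congrArg Sigma.fst hu).symm.trans (point_app_fst e (coyoneda.obj (op C)) (𝟙 C))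
  have := isIso_of_point_coyoneda_eq e he u hu
  exact ⟨asIso u⟩

end CartesianPoint

theorem cop_embeds_in_theory
    (hUnitCartesian : ∀ {X Y : c ⥤ Type} (f : X ⟶ Y),
      IsPullback f (m.η.app X) (m.η.app Y) ((m : (c ⥤ Type) ⥤ c ⥤ Type).map f)) :
    (coyoneda ⋙ m.free).Faithful ∧
    ∀ C : c, Nonempty ((coyoneda ⋙ m.free).obj (op C) ≅
      (thetaIncl m arm).obj (unitObj m arm em C)) := by
  refine ⟨?_, fun C => ?_⟩
  · have := m.free_faithful_of_isPullback_unit termPShIsTerminal fun _ => hUnitCartesian _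
    infer_instance
  · obtain ⟨i⟩ := nonempty_arity_iso_coyoneda (m.η ≫ em.symm.hom)
      (fun _ => isPullback_naturality_comp_iso (F := 𝟭 _) m.η em.symm (hUnitCartesian _)) C
    exact ⟨m.free.mapIso i.symm⟩

end Statement14

end Fam
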